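/- arXiv:1808.04098 — 5 statements merged into one kernel-verified Lean document; each statement's English description precedes it below -/
import Mathlib

section
/- The even moments of the semicircle distribution are the Catalan numbers: for every natural number k, ∫_{-2}^{2} x^{2k} · (1/(2π))√(4 - x²) dx = C_k = (1/(k+1))·binom(2k, k), and all odd moments ∫_{-2}^{2} x^{2k+1} · (1/(2π))√(4 - x²) dx vanish. -/
/-!
Substituting `x = 2 cos θ` turns the `n`-th moment into `(2^(n+1)/π) ∫₀^π sin² θ cos^n θ dθ`.
For odd `n` this vanishes: the substitution `u = sin θ` turns it into an integral from
`sin 0 = 0` to `sin π = 0`. For `n = 2k`, writing `sin² = 1 - cos²` and applying the reduction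
formula for `∫ cos^(n+2)` gives `∫ cos^(2k) / (2k+2)`, and Wallis' formula
`∫₀^π cos^(2k) = π binom(2k,k) / 4^k` leaves `binom(2k,k) / (k+1)`.
-/

open MeasureTheory Real intervalIntegral

theorem integral_pow_mul_sqrt_sq_sub_sq {r : ℝ} (hr : 0 ≤ r) (n : ℕ) :
    ∫ x in -r..r, x ^ n * √(r ^ 2 - x ^ 2) =
      r ^ (n + 2) * ∫ θ in 0..π, sin θ ^ 2 * cos θ ^ n := by
  have hsqrt {θ : ℝ} (hθ : θ ∈ Set.uIcc 0 π) : √(r ^ 2 - (r * cos θ) ^ 2) = r * sin θ := by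
    rw [Set.uIcc_of_le pi_pos.le] at hθ
    rw [← sqrt_sq (mul_nonneg hr (sin_nonneg_of_mem_Icc hθ))]
    congr 1
    linear_combination (-r ^ 2) * sin_sq_add_cos_sq θ
  have hsubst := integral_comp_mul_deriv (a := π) (b := 0) (f := fun θ ↦ r * cos θ)
    (g := fun x ↦ x ^ n * √(r ^ 2 - x ^ 2))
    (fun θ _ ↦ (hasDerivAt_cos θ).const_mul r) (by fun_prop) (by fun_prop)
  simp only [cos_pi, cos_zero, mul_neg, mul_one, Function.comp_def] at hsubst
  rw [← hsubst, integral_symm, ← intervalIntegral.integral_neg,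
    ← intervalIntegral.integral_const_mul]
  refine integral_congr fun θ hθ ↦ ?_
  rw [hsqrt hθ]
  ring

theorem integral_sin_sq_mul_cos_pow (n : ℕ) :
    ∫ θ in 0..π, sin θ ^ 2 * cos θ ^ n = (∫ θ in 0..π, cos θ ^ n) / (n + 2) := by
  have hsplit : ∫ θ in 0..π, sin θ ^ 2 * cos θ ^ n =
      (∫ θ in 0..π, cos θ ^ n) - ∫ θ in 0..π, cos θ ^ (n + 2) := by
    rw [← intervalIntegral.integral_sub ((continuous_cos.fun_pow n).intervalIntegrable _ _)
      ((continuous_cos.fun_pow (n + 2)).intervalIntegrable _ _)]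
    refine integral_congr fun θ _ ↦ ?_
    rw [sin_sq]
    ring
  rw [hsplit, integral_cos_pow, sin_zero, sin_pi]
  field_simp
  ring

theorem integral_sin_sq_mul_cos_pow_odd (k : ℕ) :
    ∫ θ in 0..π, sin θ ^ 2 * cos θ ^ (2 * k + 1) = 0 := by
  rw [integral_sin_pow_mul_cos_pow_odd, sin_zero, sin_pi, integral_same]

theorem integral_cos_pow_even (k : ℕ) :
    ∫ θ in 0..π, cos θ ^ (2 * k) = π * k.centralBinom / 4 ^ k := by
  induction k with
  | zero => simp
  | succ k ih =>
    have hbinom :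
        ((k + 1 : ℕ) : ℝ) * (k + 1).centralBinom = 2 * (2 * k + 1) * k.centralBinom := by
      exact_mod_cast Nat.succ_mul_centralBinom_succ k
    rw [Nat.mul_succ, integral_cos_pow, ih, sin_zero, sin_pi]
    push_cast at hbinom ⊢
    field_simp
    linear_combination (-2 * (4 : ℝ) ^ k * π) * hbinom

theorem catalan_eq_centralBinom_div_succ (k : ℕ) :
    (catalan k : ℝ) = k.centralBinom / (k + 1) := by
  rw [eq_div_iff (by positivity), mul_comm]
  exact_mod_cast succ_mul_catalan_eq_centralBinom k

theorem integral_pow_mul_semicircle (n : ℕ) :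
    ∫ x in (-2 : ℝ)..2, x ^ n * ((1 / (2 * π)) * √(4 - x ^ 2)) =
      2 ^ (n + 1) / π * ∫ θ in 0..π, sin θ ^ 2 * cos θ ^ n := by
  have h := integral_pow_mul_sqrt_sq_sub_sq zero_le_two n
  norm_num at h
  simp_rw [mul_left_comm _ (1 / (2 * π)), intervalIntegral.integral_const_mul, h]
  field_simp
  ring

/-- The even moments of the semicircle distribution are the Catalan numbers, and the odd
moments vanish. -/
theorem semicircle_moments (k : ℕ) :
    (∫ x in (-2 : ℝ)..2, x ^ (2 * k) * ((1 / (2 * π)) * Real.sqrt (4 - x ^ 2))) =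
      (catalan k : ℝ) ∧
    (∫ x in (-2 : ℝ)..2, x ^ (2 * k + 1) * ((1 / (2 * π)) * Real.sqrt (4 - x ^ 2))) = 0 ∧
    (catalan k : ℝ) = (1 / (k + 1 : ℝ)) * (Nat.choose (2 * k) k : ℝ) := by
  refine ⟨?_, ?_, ?_⟩
  · rw [integral_pow_mul_semicircle, integral_sin_sq_mul_cos_pow, integral_cos_pow_even,
      catalan_eq_centralBinom_div_succ]
    push_cast
    field_simp
    rw [pow_succ, pow_mul]
    ring
  · rw [integral_pow_mul_semicircle, integral_sin_sq_mul_cos_pow_odd, mul_zero]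
  · rw [catalan_eq_centralBinom_div_succ, Nat.centralBinom, one_div_mul_eq_div]
end

section
/- For any symmetric matrix A ∈ ℝ^{N×N}, a vector u uniform on the unit sphere S^{N-1}, and F := A^k for a natural number k, E[(u* F u)²] ≤ (1/N²)(3 ∑_i F_{ii}² + ∑_{i≠j} F_{ii}F_{jj} + 2 ∑_{i≠j} F_{ij}²) = ((1/N) Tr F)² + (2/N²) Tr F², where expectation is over u only. -/
open MeasureTheory Matrix
open scoped RealInnerProductSpace

/-!
Diagonalise `F = ∑ₖ λₖ bₖ bₖᵀ` in an orthonormal eigenbasis, so that `u* F u = ∑ₖ λₖ ⟪bₖ, u⟫²` and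
the second moment only involves the moments `E[⟪bₖ, u⟫² ⟪bₗ, u⟫²]`. Since a reflection carries any
vector to any other of the same norm, the law of `⟪x, u⟫` depends only on `‖x‖`. Comparing
`⟪x + y, u⟫⁴ + ⟪x - y, u⟫⁴` with `⟪√2 x, u⟫⁴` for orthonormal `x, y` gives `E[⟪x, u⟫⁴] =
3 E[⟪x, u⟫² ⟪y, u⟫²]`, and `(∑ₖ ⟪bₖ, u⟫²)² = ‖u‖⁴ = 1` fixes the common scale: the moments are
`(1 + 2 δₖₗ) / (N (N + 2))`. Hence `E[(u* F u)²] = ((Tr F)² + 2 Tr F²) / (N (N + 2))`, which is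
at most `((Tr F)² + 2 Tr F²) / N²`.
-/

theorem OrthonormalBasis.sum_inner_sq {E ι : Type*} [NormedAddCommGroup E]
    [InnerProductSpace ℝ E] [Fintype ι] (b : OrthonormalBasis ι ℝ E) (u : E) :
    ∑ i, ⟪b i, u⟫ ^ 2 = ‖u‖ ^ 2 := by
  rw [← real_inner_self_eq_norm_sq, ← b.sum_inner_mul_inner]
  simp_rw [real_inner_comm u, sq]

theorem OrthonormalBasis.inner_map_self_eq_sum_mul_inner_sq {E ι : Type*}
    [NormedAddCommGroup E] [InnerProductSpace ℝ E] [Fintype ι] (b : OrthonormalBasis ι ℝ E)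
    {T : E →ₗ[ℝ] E} {c : ι → ℝ} (hT : ∀ k, T (b k) = c k • b k) (x : E) :
    ⟪x, T x⟫ = ∑ k, c k * ⟪b k, x⟫ ^ 2 := by
  nth_rw 2 [← b.sum_repr' x]
  simp only [map_sum, map_smul, hT, inner_sum, inner_smul_right, real_inner_comm x]
  refine Finset.sum_congr rfl fun k _ => ?_
  ring

theorem sum_ite_three_one_mul {ι : Type*} [Fintype ι] [DecidableEq ι] (f : ι → ℝ) (i : ι) :
    ∑ j, (if i = j then 3 else 1) * f j = ∑ j, f j + 2 * f i := by
  have hsplit (j : ι) : (if i = j then 3 else 1) * f j = f j + if i = j then 2 * f j else 0 := by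
    split_ifs <;> ring
  simp only [hsplit, Finset.sum_add_distrib, Finset.sum_ite_eq, Finset.mem_univ, if_true]

section RotationInvariant

variable {E : Type*} [NormedAddCommGroup E] [InnerProductSpace ℝ E] [MeasurableSpace E]
  [BorelSpace E] {μ : Measure E}

theorem integral_inner_comp_eq_of_norm_eq (hinv : ∀ O : E ≃ₗᵢ[ℝ] E, μ.map O = μ) {x y : E}
    (hxy : ‖x‖ = ‖y‖) (g : ℝ → ℝ) : ∫ u, g ⟪x, u⟫ ∂μ = ∫ u, g ⟪y, u⟫ ∂μ := by
  set R := (ℝ ∙ (x - y))ᗮ.reflection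
  have hR (u : E) : ⟪y, R u⟫ = ⟪x, u⟫ := by
    rw [← Submodule.reflection_sub hxy, LinearIsometryEquiv.inner_map_map]
  simp_rw [← hR]
  exact MeasurePreserving.integral_comp' (f := R.toHomeomorph.toMeasurableEquiv)
    ⟨R.continuous.measurable, hinv R⟩ (fun u => g ⟪y, u⟫)

variable [FiniteDimensional ℝ E]

theorem integrable_of_ae_norm_eq_one [IsFiniteMeasure μ] (hsupp : ∀ᵐ u ∂μ, ‖u‖ = 1)
    {f : E → ℝ} (hf : Continuous f) : Integrable f μ := by
  rw [← Measure.restrict_eq_self_of_ae_mem (μ := μ) (s := Metric.sphere (0 : E) 1)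
    (by simpa using hsupp)]
  exact hf.continuousOn.integrableOn_compact (isCompact_sphere 0 1)

theorem integral_inner_pow_four_eq_three_mul [IsFiniteMeasure μ] (hsupp : ∀ᵐ u ∂μ, ‖u‖ = 1)
    (hinv : ∀ O : E ≃ₗᵢ[ℝ] E, μ.map O = μ) {x y : E} (hnorm : ‖x‖ = ‖y‖) (horth : ⟪x, y⟫ = 0) :
    ∫ u, ⟪x, u⟫ ^ 4 ∂μ = 3 * ∫ u, ⟪x, u⟫ ^ 2 * ⟪y, u⟫ ^ 2 ∂μ := by
  have hint (f : E → ℝ) (hf : Continuous f) : Integrable f μ :=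
    integrable_of_ae_norm_eq_one hsupp hf
  have hdiag (z : E) (hxz : ⟪x, z⟫ = 0) (hz : ‖z‖ = ‖x‖) :
      ∫ u, ⟪x + z, u⟫ ^ 4 ∂μ = 4 * ∫ u, ⟪x, u⟫ ^ 4 ∂μ := by
    have hnorm' : ‖x + z‖ = ‖Real.sqrt 2 • x‖ := by
      rw [← sq_eq_sq₀ (norm_nonneg _) (norm_nonneg _), norm_add_sq_real, hxz, norm_smul,
        mul_pow, Real.norm_eq_abs, sq_abs, Real.sq_sqrt zero_le_two, hz]
      ring
    have hsqrt : Real.sqrt 2 ^ 4 = 4 := by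
      rw [show 4 = 2 * 2 by rfl, pow_mul, Real.sq_sqrt zero_le_two]
      norm_num
    rw [integral_inner_comp_eq_of_norm_eq hinv hnorm' (· ^ 4), ← integral_const_mul]
    simp_rw [real_inner_smul_left, mul_pow, hsqrt]
  have hadd := hdiag y horth hnorm.symm
  have hsub := hdiag (-y) (by rw [inner_neg_right, horth, neg_zero]) (by rw [norm_neg, hnorm])
  rw [← sub_eq_add_neg] at hsub
  have hy : ∫ u, ⟪y, u⟫ ^ 4 ∂μ = ∫ u, ⟪x, u⟫ ^ 4 ∂μ :=
    integral_inner_comp_eq_of_norm_eq hinv hnorm.symm (· ^ 4)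
  have hsum : ∫ u, (⟪x + y, u⟫ ^ 4 + ⟪x - y, u⟫ ^ 4) ∂μ
      = ∫ u, (2 * ⟪x, u⟫ ^ 4 + 12 * (⟪x, u⟫ ^ 2 * ⟪y, u⟫ ^ 2) + 2 * ⟪y, u⟫ ^ 4) ∂μ := by
    congr with u
    rw [inner_add_left, inner_sub_left]
    ring
  rw [integral_add (hint _ (by fun_prop)) (hint _ (by fun_prop)),
    integral_add (hint _ (by fun_prop)) (hint _ (by fun_prop)),
    integral_add (hint _ (by fun_prop)) (hint _ (by fun_prop)),
    integral_const_mul, integral_const_mul, integral_const_mul, hadd, hsub, hy] at hsum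
  linarith

variable [IsProbabilityMeasure μ] {ι : Type*} [Fintype ι]

theorem sum_sum_integral_inner_sq_mul_inner_sq (hsupp : ∀ᵐ u ∂μ, ‖u‖ = 1)
    (b : OrthonormalBasis ι ℝ E) : ∑ i, ∑ j, ∫ u, ⟪b i, u⟫ ^ 2 * ⟪b j, u⟫ ^ 2 ∂μ = 1 := by
  have hint (f : E → ℝ) (hf : Continuous f) : Integrable f μ :=
    integrable_of_ae_norm_eq_one hsupp hf
  have hrow (i : ι) : ∑ j, ∫ u, ⟪b i, u⟫ ^ 2 * ⟪b j, u⟫ ^ 2 ∂μ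
      = ∫ u, ∑ j, ⟪b i, u⟫ ^ 2 * ⟪b j, u⟫ ^ 2 ∂μ :=
    (integral_finsetSum _ fun j _ => hint _ (by fun_prop)).symm
  rw [Finset.sum_congr rfl fun i _ => hrow i,
    ← integral_finsetSum _ fun i _ => hint _ (by fun_prop)]
  calc ∫ u, ∑ i, ∑ j, ⟪b i, u⟫ ^ 2 * ⟪b j, u⟫ ^ 2 ∂μ = ∫ u, ‖u‖ ^ 2 * ‖u‖ ^ 2 ∂μ := by
        simp_rw [← Finset.sum_mul_sum, b.sum_inner_sq]
    _ = ∫ _, 1 ∂μ := integral_congr_ae (hsupp.mono fun u hu => by simp [hu])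
    _ = 1 := by simp

variable [DecidableEq ι]

theorem integral_inner_sq_mul_inner_sq (hsupp : ∀ᵐ u ∂μ, ‖u‖ = 1)
    (hinv : ∀ O : E ≃ₗᵢ[ℝ] E, μ.map O = μ) (b : OrthonormalBasis ι ℝ E) (k l : ι) :
    ∫ u, ⟪b k, u⟫ ^ 2 * ⟪b l, u⟫ ^ 2 ∂μ
      = (if k = l then 3 else 1) / (Fintype.card ι * (Fintype.card ι + 2)) := by
  have hb (i : ι) : ‖b i‖ = 1 := b.orthonormal.norm_eq_one i
  set m := ∫ u, ⟪b k, u⟫ ^ 4 ∂μ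
  have hm (i j : ι) : ∫ u, ⟪b i, u⟫ ^ 2 * ⟪b j, u⟫ ^ 2 ∂μ = m / 3 * if i = j then 3 else 1 := by
    have hi : ∫ u, ⟪b i, u⟫ ^ 4 ∂μ = m :=
      integral_inner_comp_eq_of_norm_eq hinv (by rw [hb, hb]) (· ^ 4)
    split_ifs with hij
    · subst hij
      simp_rw [← pow_add]
      linarith
    · rw [← hi, integral_inner_pow_four_eq_three_mul hsupp hinv (by rw [hb, hb])
        (b.orthonormal.inner_eq_zero hij)]
      ring
  have htotal := sum_sum_integral_inner_sq_mul_inner_sq hsupp b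
  have hrow (i : ι) : ∑ j, (if i = j then (3 : ℝ) else 1) = Fintype.card ι + 2 := by
    simpa using sum_ite_three_one_mul (fun _ => (1 : ℝ)) i
  simp_rw [hm, ← Finset.mul_sum, hrow] at htotal
  rw [Finset.sum_const, Finset.card_univ, nsmul_eq_mul] at htotal
  have hn : (Fintype.card ι : ℝ) * (Fintype.card ι + 2) ≠ 0 := by
    rintro h
    rw [h, mul_zero] at htotal
    exact zero_ne_one htotal
  rw [hm, eq_div_iff hn, mul_right_comm, htotal, one_mul]

theorem integral_sum_mul_inner_sq_sq (hsupp : ∀ᵐ u ∂μ, ‖u‖ = 1)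
    (hinv : ∀ O : E ≃ₗᵢ[ℝ] E, μ.map O = μ) (b : OrthonormalBasis ι ℝ E) (c : ι → ℝ) :
    ∫ u, (∑ k, c k * ⟪b k, u⟫ ^ 2) ^ 2 ∂μ
      = ((∑ k, c k) ^ 2 + 2 * ∑ k, c k ^ 2) / (Fintype.card ι * (Fintype.card ι + 2)) := by
  have hint (f : E → ℝ) (hf : Continuous f) : Integrable f μ :=
    integrable_of_ae_norm_eq_one hsupp hf
  have hexpand (u : E) : (∑ k, c k * ⟪b k, u⟫ ^ 2) ^ 2
      = ∑ k, ∑ l, c k * c l * (⟪b k, u⟫ ^ 2 * ⟪b l, u⟫ ^ 2) := by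
    rw [sq, Finset.sum_mul_sum]
    simp_rw [mul_mul_mul_comm]
  have hrow_integral (k : ι) : ∫ u, ∑ l, c k * c l * (⟪b k, u⟫ ^ 2 * ⟪b l, u⟫ ^ 2) ∂μ
      = ∑ l, c k * c l * (if k = l then 3 else 1) / (Fintype.card ι * (Fintype.card ι + 2)) := by
    rw [integral_finsetSum _ fun l _ => hint _ (by fun_prop)]
    simp_rw [integral_const_mul, integral_inner_sq_mul_inner_sq hsupp hinv b, mul_div]
  have hrow (k : ι) :
      ∑ l, c k * c l * (if k = l then 3 else 1) = c k * ∑ l, c l + 2 * c k ^ 2 := by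
    calc ∑ l, c k * c l * (if k = l then 3 else 1)
        = c k * ∑ l, (if k = l then 3 else 1) * c l := by
          rw [Finset.mul_sum]
          exact Finset.sum_congr rfl fun l _ => by ring
      _ = c k * ∑ l, c l + 2 * c k ^ 2 := by
          rw [sum_ite_three_one_mul]
          ring
  simp_rw [hexpand]
  rw [integral_finsetSum _ fun k _ => hint _ (by fun_prop),
    Finset.sum_congr rfl fun k _ => hrow_integral k]
  simp_rw [← Finset.sum_div]
  rw [Finset.sum_congr rfl fun k _ => hrow k, Finset.sum_add_distrib, ← Finset.sum_mul,
    ← Finset.mul_sum, sq (∑ k, c k)]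

end RotationInvariant

namespace Matrix.IsHermitian

variable {ι : Type*} [Fintype ι] [DecidableEq ι] {F : Matrix ι ι ℝ}

theorem sum_mul_mul_eq_sum_eigenvalues_mul_inner_sq (hF : F.IsHermitian)
    (u : EuclideanSpace ℝ ι) :
    ∑ i, ∑ j, u i * F i j * u j = ∑ k, hF.eigenvalues k * ⟪hF.eigenvectorBasis k, u⟫ ^ 2 := by
  rw [← hF.eigenvectorBasis.inner_map_self_eq_sum_mul_inner_sq (T := toEuclideanLin F)]
  · simp only [PiLp.inner_apply, toLpLin_apply, mulVec, dotProduct, RCLike.inner_apply,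
      conj_trivial, Finset.sum_mul]
    exact Finset.sum_congr rfl fun i _ => Finset.sum_congr rfl fun j _ => by ring
  · intro k
    ext i
    simpa [toLpLin_apply] using congrFun (hF.mulVec_eigenvectorBasis k) i

theorem trace_sq_eq_sum_eigenvalues_sq (hF : F.IsHermitian) :
    (F ^ 2).trace = ∑ k, hF.eigenvalues k ^ 2 := by
  conv_lhs => rw [hF.spectral_theorem, ← map_pow, Unitary.conjStarAlgAut_apply, trace_mul_cycle,
    Unitary.coe_star_mul_self, one_mul, diagonal_pow, trace_diagonal]
  simp

theorem integral_sum_mul_mul_sq {μ : Measure (EuclideanSpace ℝ ι)} [IsProbabilityMeasure μ]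
    (hsupp : ∀ᵐ u ∂μ, ‖u‖ = 1)
    (hinv : ∀ O : EuclideanSpace ℝ ι ≃ₗᵢ[ℝ] EuclideanSpace ℝ ι, μ.map O = μ)
    (hF : F.IsHermitian) :
    ∫ u, (∑ i, ∑ j, u i * F i j * u j) ^ 2 ∂μ
      = (F.trace ^ 2 + 2 * (F ^ 2).trace) / (Fintype.card ι * (Fintype.card ι + 2)) := by
  simp_rw [hF.sum_mul_mul_eq_sum_eigenvalues_mul_inner_sq,
    integral_sum_mul_inner_sq_sq hsupp hinv, hF.trace_sq_eq_sum_eigenvalues_sq,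
    hF.trace_eq_sum_eigenvalues, RCLike.ofReal_real_eq_id, id]

end Matrix.IsHermitian

theorem Matrix.IsSymm.sum_diag_sq_add_sum_offDiag_eq_trace {ι : Type*} [Fintype ι]
    [DecidableEq ι] {F : Matrix ι ι ℝ} (hF : F.IsSymm) :
    3 * ∑ i, F i i ^ 2 + ∑ i, ∑ j ∈ Finset.univ.erase i, F i i * F j j
      + 2 * ∑ i, ∑ j ∈ Finset.univ.erase i, F i j ^ 2 = F.trace ^ 2 + 2 * (F ^ 2).trace := by
  simp only [Finset.sum_erase_eq_sub (Finset.mem_univ _), Finset.sum_sub_distrib, sq, trace,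
    Finset.sum_mul_sum, diag_apply, mul_apply, hF.apply _ _]
  ring

/-- Second moment bound for the quadratic form `u* A^k u` with `u` uniform on the sphere:
`E[(u* F u)²] ≤ (1/N²)(3 ∑ F_ii² + ∑_{i≠j} F_ii F_jj + 2 ∑_{i≠j} F_ij²)
  = ((1/N) Tr F)² + (2/N²) Tr F²`, where `F = A^k`. -/
theorem quadratic_form_second_moment_bound (N : ℕ) (hN : 1 ≤ N)
    (μ : Measure (EuclideanSpace ℝ (Fin N))) [IsProbabilityMeasure μ]
    (hsupp : ∀ᵐ u ∂μ, ‖u‖ = 1)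
    (hinv : ∀ O : EuclideanSpace ℝ (Fin N) ≃ₗᵢ[ℝ] EuclideanSpace ℝ (Fin N), μ.map O = μ)
    (A : Matrix (Fin N) (Fin N) ℝ) (hA : A.IsSymm) (k : ℕ) (F : Matrix (Fin N) (Fin N) ℝ)
    (hF : F = A ^ k) :
    (∫ u, (∑ i : Fin N, ∑ j : Fin N, u i * F i j * u j) ^ 2 ∂μ ≤
      (1 / (N : ℝ) ^ 2) *
        (3 * ∑ i : Fin N, F i i ^ 2 +
          ∑ i : Fin N, ∑ j ∈ Finset.univ.erase i, F i i * F j j +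
          2 * ∑ i : Fin N, ∑ j ∈ Finset.univ.erase i, F i j ^ 2)) ∧
    (1 / (N : ℝ) ^ 2) *
        (3 * ∑ i : Fin N, F i i ^ 2 +
          ∑ i : Fin N, ∑ j ∈ Finset.univ.erase i, F i i * F j j +
          2 * ∑ i : Fin N, ∑ j ∈ Finset.univ.erase i, F i j ^ 2) =
      ((1 / (N : ℝ)) * (F.trace)) ^ 2 + (2 / (N : ℝ) ^ 2) * ((F ^ 2).trace) := by
  have hsymm : F.IsSymm := hF ▸ hA.pow k
  have hherm : F.IsHermitian := isHermitian_iff_isSymm.2 hsymm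
  rw [hsymm.sum_diag_sq_add_sum_offDiag_eq_trace]
  refine ⟨?_, by ring⟩
  have hpos : (0 : ℝ) < N := by exact_mod_cast hN
  have hnum : 0 ≤ F.trace ^ 2 + 2 * (F ^ 2).trace := by
    rw [hherm.trace_sq_eq_sum_eigenvalues_sq]
    positivity
  rw [hherm.integral_sum_mul_mul_sq hsupp hinv, Fintype.card_fin, one_div_mul_eq_div]
  exact div_le_div_of_nonneg_left hnum (by positivity) (by nlinarith)
end

section
/- Let I_{m,n} be the number of lattice paths consisting of 2m Dyck steps (±1 steps staying at or above level 0, starting and ending at level 0) and n horizontal steps, where horizontal steps may occur only at level 0. Then I_{m,n} satisfies the recurrence I_{m,n} = I_{m+1,n-1} - I_{m+1,n-2} for all m ≥ 0 and n ≥ 2 (with the convention I_{m,-1} = 0). -/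
/-!
Split the paths counted by `I_{m+1,n-1}` by their first step. Those starting with a horizontal
step are, after deleting it, exactly the paths counted by `I_{m+1,n-2}`. A path starting with an
up step is `1 :: A ++ -1 :: Q`, where `A` is the Dyck path before the first return to level `0`;
merging that up step and its matching down step into one horizontal step gives `A ++ 0 :: Q`,
which is an arbitrary path counted by `I_{m,n}` cut at its first horizontal step. Hence
`I_{m+1,n-1} = I_{m,n} + I_{m+1,n-2}`.
-/

/-- A valid path: a list of steps `+1`, `-1` (Dyck steps) and `0` (horizontal steps),
staying at or above level `0`, starting and ending at level `0`, with horizontal steps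
allowed only at level `0`. -/
def IsDyckHPath (l : List ℤ) : Prop :=
  (∀ s ∈ l, s = 1 ∨ s = -1 ∨ s = 0) ∧
  (∀ t : ℕ, 0 ≤ (l.take t).sum) ∧
  l.sum = 0 ∧
  (∀ t : ℕ, l[t]? = some 0 → (l.take t).sum = 0)

/-- `I m n` is the number of paths with `2m` Dyck steps and `n` horizontal steps, the
horizontal steps occurring only at level `0`. -/
noncomputable def pathCount (m n : ℕ) : ℕ :=
  Nat.card {l : List ℤ // IsDyckHPath l ∧ l.count 0 = n ∧ l.length = 2 * m + n}

namespace List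

theorem exists_eq_append_neg_one_cons_of_sum_take_neg {r : List ℤ} (hstep : ∀ s ∈ r, -1 ≤ s)
    (hneg : ∃ t, (r.take t).sum < 0) :
    ∃ A Q, r = A ++ -1 :: Q ∧ (∀ t, 0 ≤ (A.take t).sum) ∧ A.sum = 0 := by
  induction r using List.reverseRecOn with
  | nil => simp at hneg
  | append_singleton r s ih =>
    by_cases hr : ∃ t, (r.take t).sum < 0
    · obtain ⟨A, Q, rfl, hA, hsum⟩ := ih (fun x hx => hstep x (by simp [hx])) hr
      exact ⟨A, Q ++ [s], by simp, hA, hsum⟩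
    · push Not at hr
      obtain ⟨t, ht⟩ := hneg
      rw [List.take_append, List.sum_append] at ht
      have hlen : r.length < t := by
        by_contra! h
        rw [Nat.sub_eq_zero_of_le h] at ht
        simp only [List.take_zero, List.sum_nil, add_zero] at ht
        exact (hr t).not_gt ht
      rw [List.take_of_length_le hlen.le,
        List.take_of_length_le (by simp only [List.length_singleton]; omega)] at ht
      have hr_sum := hr r.length
      have hs := hstep s (by simp)
      rw [List.take_length] at hr_sum
      simp only [List.sum_singleton] at ht
      obtain rfl : s = -1 := by omega
      exact ⟨r, [], rfl, hr, by omega⟩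

theorem length_le_of_append_neg_one_cons_eq {A A' Q Q' : List ℤ}
    (hA' : ∀ t, 0 ≤ (A'.take t).sum) (hA : A.sum = 0) (h : A ++ -1 :: Q = A' ++ -1 :: Q') :
    A'.length ≤ A.length := by
  by_contra! hlt
  have hprefix := congrArg (fun l => (l.take (A.length + 1)).sum) h
  simp [List.take_append, List.take_of_length_le (Nat.le_succ _), Nat.sub_eq_zero_of_le hlt,
    hA] at hprefix
  linarith [hA' (A.length + 1)]

theorem append_neg_one_cons_inj {A A' Q Q' : List ℤ}
    (hA : ∀ t, 0 ≤ (A.take t).sum) (hA' : ∀ t, 0 ≤ (A'.take t).sum)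
    (hsA : A.sum = 0) (hsA' : A'.sum = 0) (h : A ++ -1 :: Q = A' ++ -1 :: Q') :
    A = A' ∧ Q = Q' := by
  have hlen : A.length = A'.length :=
    le_antisymm (length_le_of_append_neg_one_cons_eq hA hsA' h.symm)
      (length_le_of_append_neg_one_cons_eq hA' hsA h)
  obtain ⟨rfl, hQ⟩ := List.append_inj h hlen
  exact ⟨rfl, (List.cons.inj hQ).2⟩

end List

namespace IsDyckHPath

variable {A B Q r : List ℤ}

theorem append (hA : IsDyckHPath A) (hB : IsDyckHPath B) : IsDyckHPath (A ++ B) := by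
  refine ⟨fun s hs => ?_, fun t => ?_, ?_, fun t ht => ?_⟩
  · rcases List.mem_append.1 hs with hs | hs
    exacts [hA.1 s hs, hB.1 s hs]
  · rw [List.take_append, List.sum_append]
    exact add_nonneg (hA.2.1 t) (hB.2.1 _)
  · rw [List.sum_append, hA.2.2.1, hB.2.2.1, add_zero]
  · rw [List.take_append, List.sum_append]
    rcases lt_or_ge t A.length with h | h
    · rw [List.getElem?_append_left h] at ht
      rw [hA.2.2.2 t ht, Nat.sub_eq_zero_of_le h.le, List.take_zero, List.sum_nil, add_zero]
    · rw [List.getElem?_append_right h] at ht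
      rw [List.take_of_length_le h, hA.2.2.1, hB.2.2.2 _ ht, zero_add]

theorem of_append (h : IsDyckHPath (A ++ B)) (hA : A.sum = 0) :
    IsDyckHPath A ∧ IsDyckHPath B := by
  obtain ⟨hstep, hpre, hsum, hzero⟩ := h
  have hpreB (t : ℕ) : ((A ++ B).take (A.length + t)).sum = (B.take t).sum := by
    simp [List.take_append, List.take_of_length_le (Nat.le_add_right _ _), hA]
  refine ⟨⟨fun s hs => hstep s (List.mem_append_left B hs), fun t => ?_, hA, fun t ht => ?_⟩,
    ⟨fun s hs => hstep s (List.mem_append_right A hs), fun t => ?_, ?_, fun t ht => ?_⟩⟩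
  · rcases le_or_gt t A.length with h | h
    · simpa [List.take_append_of_le_length h] using hpre t
    · rw [List.take_of_length_le h.le, hA]
  · have hlt := (List.getElem?_eq_some_iff.1 ht).1
    simpa [List.take_append_of_le_length hlt.le] using
      hzero t (by rw [List.getElem?_append_left hlt, ht])
  · exact hpreB t ▸ hpre _
  · rwa [List.sum_append, hA, zero_add] at hsum
  · refine hpreB t ▸ hzero _ ?_
    rwa [List.getElem?_append_right (Nat.le_add_right _ _), Nat.add_sub_cancel_left]

theorem zero_cons_iff : IsDyckHPath (0 :: Q) ↔ IsDyckHPath Q := by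
  have hzero : IsDyckHPath [0] :=
    ⟨by simp, fun t => by cases t <;> simp, rfl, fun t _ => by cases t <;> simp⟩
  exact ⟨fun h => (of_append (A := [0]) h rfl).2, hzero.append⟩

theorem one_cons_append_neg_one_cons (hA : IsDyckHPath A) (hA0 : 0 ∉ A) (hQ : IsDyckHPath Q) :
    IsDyckHPath (1 :: A ++ -1 :: Q) := by
  have hup : IsDyckHPath (1 :: A ++ [-1]) := by
    refine ⟨fun s hs => ?_, fun t => ?_, by simp [hA.2.2.1],
      fun t ht => absurd (List.mem_of_getElem? ht) (by simpa using hA0)⟩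
    · simp only [List.cons_append, List.mem_cons, List.mem_append, List.not_mem_nil,
        or_false] at hs
      rcases hs with rfl | hs | rfl
      exacts [Or.inl rfl, hA.1 s hs, Or.inr (Or.inl rfl)]
    · cases t with
      | zero => simp
      | succ t =>
        have hlast : -1 ≤ ([-1].take (t - A.length)).sum := by
          cases t - A.length <;> simp
        simp only [List.cons_append, List.take_succ_cons, List.sum_cons, List.take_append,
          List.sum_append]
        linarith [hA.2.1 t]
  simpa using hup.append hQ

theorem exists_eq_append_zero_cons {l : List ℤ} (hl : IsDyckHPath l) (h0 : (0 : ℤ) ∈ l) :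
    ∃ A Q, l = A ++ 0 :: Q ∧ 0 ∉ A ∧ IsDyckHPath A ∧ IsDyckHPath Q := by
  obtain ⟨A, Q, rfl, hA0⟩ := List.eq_append_cons_of_mem h0
  have hsum : A.sum = 0 := by
    simpa using hl.2.2.2 A.length (by simp)
  obtain ⟨hA, hQ⟩ := hl.of_append hsum
  exact ⟨A, Q, rfl, hA0, hA, zero_cons_iff.1 hQ⟩

theorem exists_eq_append_neg_one_cons_of_one_cons (hl : IsDyckHPath (1 :: r)) :
    ∃ A Q, r = A ++ -1 :: Q ∧ 0 ∉ A ∧ IsDyckHPath A ∧ IsDyckHPath Q := by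
  have hstep (s : ℤ) (hs : s ∈ r) : -1 ≤ s := by
    rcases hl.1 s (List.mem_cons_of_mem 1 hs) with h | h | h <;> simp [h]
  have hsum : r.sum = -1 := by
    have := hl.2.2.1
    simp only [List.sum_cons] at this
    omega
  obtain ⟨A, Q, rfl, hApre, hAsum⟩ :=
    List.exists_eq_append_neg_one_cons_of_sum_take_neg hstep ⟨r.length, by simp [hsum]⟩
  have hA0 : (0 : ℤ) ∉ A := by
    intro h0
    obtain ⟨i, hi, hAi⟩ := List.getElem_of_mem h0
    have := hl.2.2.2 (i + 1)
      (by simp [List.getElem?_append_left hi, List.getElem?_eq_getElem hi, hAi])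
    simp [List.take_append_of_le_length hi.le] at this
    linarith [hApre i]
  have hA : IsDyckHPath A :=
    ⟨fun s hs => hl.1 s (by simp [hs]), hApre, hAsum,
      fun t ht => absurd (List.mem_of_getElem? ht) hA0⟩
  have hQ := (of_append (A := 1 :: A ++ [-1]) (B := Q) (by simpa using hl) (by simp [hAsum])).2
  exact ⟨A, Q, rfl, hA0, hA, hQ⟩

end IsDyckHPath

def pathSet (m n : ℕ) : Set (List ℤ) :=
  {l | IsDyckHPath l ∧ l.count 0 = n ∧ l.length = 2 * m + n}

theorem pathCount_eq_ncard (m n : ℕ) : pathCount m n = (pathSet m n).ncard :=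
  Nat.card_coe_set_eq _

theorem pathSet_finite (m n : ℕ) : (pathSet m n).Finite := by
  let steps : Set ℤ := {1, -1, 0}
  refine ((List.finite_length_eq steps (2 * m + n)).image (List.map Subtype.val)).subset ?_
  rintro l ⟨hl, -, hlen⟩
  lift l to List steps using hl.1
  exact ⟨l, by simpa using hlen, rfl⟩

-- `List.replace` changes only the first occurrence.
def raiseFirstZero (l : List ℤ) : List ℤ :=
  1 :: l.replace 0 (-1)

theorem raiseFirstZero_append_zero_cons {A Q : List ℤ} (hA0 : 0 ∉ A) :
    raiseFirstZero (A ++ 0 :: Q) = 1 :: A ++ -1 :: Q := by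
  simp [raiseFirstZero, List.replace_append_right hA0]

theorem injOn_raiseFirstZero : Set.InjOn raiseFirstZero {l | IsDyckHPath l ∧ 0 ∈ l} := by
  rintro l ⟨hl, hl0⟩ l' ⟨hl', hl0'⟩ h
  obtain ⟨A, Q, rfl, hA0, hA, -⟩ := hl.exists_eq_append_zero_cons hl0
  obtain ⟨A', Q', rfl, hA0', hA', -⟩ := hl'.exists_eq_append_zero_cons hl0'
  rw [raiseFirstZero_append_zero_cons hA0, raiseFirstZero_append_zero_cons hA0'] at h
  obtain ⟨rfl, rfl⟩ :=
    List.append_neg_one_cons_inj hA.2.1 hA'.2.1 hA.2.2.1 hA'.2.2.1 (List.cons.inj h).2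
  rfl

theorem pathSet_succ_succ (m k : ℕ) :
    pathSet (m + 1) (k + 1) =
      raiseFirstZero '' pathSet m (k + 2) ∪ List.cons 0 '' pathSet (m + 1) k := by
  ext l
  constructor
  · rintro ⟨hl, hcount, hlen⟩
    obtain ⟨s, r, rfl⟩ : ∃ s r, l = s :: r :=
      List.exists_cons_of_ne_nil (by rintro rfl; simp at hlen)
    rcases hl.1 s List.mem_cons_self with rfl | rfl | rfl
    · obtain ⟨A, Q, rfl, hA0, hA, hQ⟩ := hl.exists_eq_append_neg_one_cons_of_one_cons
      refine Or.inl ⟨A ++ 0 :: Q, ⟨hA.append (IsDyckHPath.zero_cons_iff.2 hQ), ?_, ?_⟩,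
        raiseFirstZero_append_zero_cons hA0⟩
      · simpa [List.count_append, List.count_eq_zero_of_not_mem hA0] using hcount
      · simp at hlen ⊢
        omega
    · exact absurd (hl.2.1 1) (by simp)
    · refine Or.inr ⟨r, ⟨IsDyckHPath.zero_cons_iff.1 hl, by simpa using hcount, ?_⟩, rfl⟩
      simp at hlen
      omega
  · rintro (⟨l, ⟨hl, hcount, hlen⟩, rfl⟩ | ⟨l, ⟨hl, hcount, hlen⟩, rfl⟩)
    · obtain ⟨A, Q, rfl, hA0, hA, hQ⟩ :=
        hl.exists_eq_append_zero_cons (List.count_pos_iff.1 (by omega))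
      rw [raiseFirstZero_append_zero_cons hA0]
      refine ⟨hA.one_cons_append_neg_one_cons hA0 hQ, ?_, ?_⟩
      · simp [List.count_append, List.count_eq_zero_of_not_mem hA0] at hcount ⊢
        omega
      · simp at hlen ⊢
        omega
    · exact ⟨IsDyckHPath.zero_cons_iff.2 hl, by simp [hcount], by simp [hlen]; ring⟩

theorem pathCount_succ_succ (m k : ℕ) :
    pathCount (m + 1) (k + 1) = pathCount m (k + 2) + pathCount (m + 1) k := by
  have hdisj :
      Disjoint (raiseFirstZero '' pathSet m (k + 2)) (List.cons 0 '' pathSet (m + 1) k) := by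
    rw [Set.disjoint_left]
    rintro _ ⟨l, -, rfl⟩ ⟨l', -, h⟩
    simp [raiseFirstZero] at h
  have hinj : Set.InjOn raiseFirstZero (pathSet m (k + 2)) :=
    injOn_raiseFirstZero.mono fun l hl =>
      show IsDyckHPath l ∧ 0 ∈ l from ⟨hl.1, List.count_pos_iff.1 (by rw [hl.2.1]; omega)⟩
  simp only [pathCount_eq_ncard, pathSet_succ_succ]
  rw [Set.ncard_union_eq hdisj ((pathSet_finite _ _).image _) ((pathSet_finite _ _).image _),
    hinj.ncard_image, List.cons_injective.injOn.ncard_image]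

/-- Recurrence for the path counts: `I_{m,n} = I_{m+1,n-1} - I_{m+1,n-2}` for `n ≥ 2`. -/
theorem pathCount_recurrence (m n : ℕ) (hn : 2 ≤ n) :
    (pathCount m n : ℤ) = pathCount (m + 1) (n - 1) - pathCount (m + 1) (n - 2) := by
  obtain ⟨k, rfl⟩ := Nat.exists_eq_add_of_le' hn
  rw [Nat.add_sub_cancel, show k + 2 - 1 = k + 1 from rfl, pathCount_succ_succ]
  push_cast
  ring
end

section
/- Moment characterization forcing f_0 = 1: if a_0, a_1, a_2, ... are real numbers such that for every natural number k, ∑_{i≥0} a_{2i} C_{k+i} = C_k and ∑_{i≥0} a_{2i+1} C_{k+1+i} = 0 (with only finitely many a_i nonzero), then a_0 = 1 and a_i = 0 for all i ≥ 1. -/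
/-!
From `(m + 2) C_{m+1} = (4m + 2) C_m`, the ratio `C_{k+i} / C_k` is the rational function
`∏_{l<i} (4(k+l)+2) / ∏_{l<i} (k+l+2)` of `k`. Multiplying `∑_{i≤N} d_i C_{k+i} / C_k` by the
common denominator `∏_{l<N} (k+l+2)` gives a polynomial in `k`; if the sum vanishes for infinitely
many `k`, this polynomial is zero. At `k = -N-1` every term with `i < N` contains the factor
`k + N + 1`, so only `d_N` times a nonzero number survives, whence `d_N = 0`; induction on `N` shows
that the shifted Catalan sequences are linearly independent. Applied to the odd coefficients and
to the even ones minus the constant function `1`, this gives the theorem.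
-/

open Finset Polynomial

theorem catalan_pos (n : ℕ) : 0 < catalan n :=
  Nat.pos_of_mul_pos_left ((succ_mul_catalan_eq_centralBinom n).symm ▸ n.centralBinom_pos)

theorem succ_succ_mul_catalan_succ (n : ℕ) :
    (n + 2) * catalan (n + 1) = (4 * n + 2) * catalan n := by
  apply Nat.eq_of_mul_eq_mul_left n.succ_pos
  calc (n + 1) * ((n + 2) * catalan (n + 1)) = (n + 1) * (n + 1).centralBinom := by
        rw [← succ_mul_catalan_eq_centralBinom]
    _ = 2 * (2 * n + 1) * n.centralBinom := n.succ_mul_centralBinom_succ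
    _ = (n + 1) * ((4 * n + 2) * catalan n) := by
        rw [← succ_mul_catalan_eq_centralBinom]; ring

theorem catalan_add_mul_prod (k i : ℕ) :
    catalan (k + i) * ∏ l ∈ range i, (k + l + 2) =
      catalan k * ∏ l ∈ range i, (4 * (k + l) + 2) := by
  induction i with
  | zero => simp
  | succ i ih =>
    rw [prod_range_succ, prod_range_succ, ← add_assoc]
    calc catalan (k + i + 1) * ((∏ l ∈ range i, (k + l + 2)) * (k + i + 2))
        = (∏ l ∈ range i, (k + l + 2)) * ((k + i + 2) * catalan (k + i + 1)) := by ring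
      _ = (catalan (k + i) * ∏ l ∈ range i, (k + l + 2)) * (4 * (k + i) + 2) := by
        rw [succ_succ_mul_catalan_succ]; ring
      _ = _ := by rw [ih]; ring

section

variable {R : Type*} [CommRing R]

noncomputable def catalanRatioPoly (N i : ℕ) : R[X] :=
  (∏ l ∈ range i, (4 * (X + (l : R[X])) + 2)) * ∏ l ∈ Ico i N, (X + (l : R[X]) + 2)

theorem catalan_mul_eval_catalanRatioPoly {N i : ℕ} (hi : i ≤ N) (k : ℕ) :
    (catalan k : R) * (catalanRatioPoly N i).eval (k : R) =
      catalan (k + i) * ∏ l ∈ range N, ((k : R) + l + 2) := by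
  have h := congrArg (Nat.cast : ℕ → R) (catalan_add_mul_prod k i)
  push_cast at h
  simp only [catalanRatioPoly, eval_mul, eval_prod, eval_add, eval_X, eval_natCast, eval_ofNat]
  rw [← prod_range_mul_prod_Ico _ hi, ← mul_assoc, ← mul_assoc, h]

theorem eval_catalanRatioPoly_of_lt {N i : ℕ} (hi : i < N) :
    (catalanRatioPoly N i).eval (-(N : R) - 1) = 0 := by
  obtain ⟨M, rfl⟩ := Nat.exists_eq_add_of_lt hi
  rw [catalanRatioPoly, eval_mul]
  refine mul_eq_zero_of_right _ ?_
  rw [eval_prod, prod_eq_zero (i := i + M) (by simp) (by simp; ring)]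

variable [IsDomain R] [CharZero R]

theorem eval_catalanRatioPoly_self_ne_zero (N : ℕ) :
    (catalanRatioPoly N N).eval (-(N : R) - 1) ≠ 0 := by
  simp only [catalanRatioPoly, Ico_self, prod_empty, mul_one, eval_prod]
  refine prod_ne_zero_iff.2 fun l _ => ?_
  have h : (4 * (-(N : R) - 1 + l) + 2) = ((4 * l - 4 * N - 2 : ℤ) : R) := by push_cast; ring
  simp only [eval_add, eval_mul, eval_X, eval_natCast, eval_ofNat, h]
  exact Int.cast_ne_zero.2 (by omega)

theorem eq_zero_of_sum_range_succ_mul_catalan_add {d : ℕ → R} {N : ℕ}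
    (h : {k : ℕ | ∑ i ∈ range (N + 1), d i * catalan (k + i) = 0}.Infinite) : d N = 0 := by
  set Q : R[X] := ∑ i ∈ range (N + 1), C (d i) * catalanRatioPoly N i
  have hQ : Q = 0 := by
    refine eq_zero_of_infinite_isRoot Q ((h.image Nat.cast_injective.injOn).mono ?_)
    rintro _ ⟨k, hk : ∑ i ∈ range (N + 1), d i * catalan (k + i) = 0, rfl⟩
    have hcat : (catalan k : R) * Q.eval (k : R) = 0 := by
      simp only [Q, eval_finsetSum, eval_mul, eval_C, mul_sum, mul_left_comm (catalan k : R)]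
      rw [sum_congr rfl fun i hi => by
          rw [catalan_mul_eval_catalanRatioPoly (mem_range_succ_iff.1 hi), ← mul_assoc],
        ← sum_mul, hk, zero_mul]
    exact (mul_eq_zero.1 hcat).resolve_left (Nat.cast_ne_zero.2 (catalan_pos k).ne')
  have hQN : Q.eval (-(N : R) - 1) = 0 := by rw [hQ, eval_zero]
  rw [eval_finsetSum, sum_range_succ] at hQN
  simp only [eval_mul, eval_C] at hQN
  rw [sum_eq_zero fun i hi => by rw [eval_catalanRatioPoly_of_lt (mem_range.1 hi), mul_zero],
    zero_add] at hQN
  exact (mul_eq_zero.1 hQN).resolve_right (eval_catalanRatioPoly_self_ne_zero N)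

theorem eq_zero_of_sum_range_mul_catalan_add {d : ℕ → R} {N : ℕ}
    (h : {k : ℕ | ∑ i ∈ range N, d i * catalan (k + i) = 0}.Infinite) : ∀ i < N, d i = 0 := by
  induction N with
  | zero => simp
  | succ N ih =>
    have hN := eq_zero_of_sum_range_succ_mul_catalan_add h
    simp only [sum_range_succ, hN, zero_mul, add_zero] at h
    intro i hi
    rcases Nat.lt_succ_iff_lt_or_eq.1 hi with hi | rfl
    exacts [ih h i hi, hN]

end

/-- Moment characterization forcing `f_0 = 1`: if `(a_i)` has finite support and for every
`k`, `∑_i a_{2i} C_{k+i} = C_k` and `∑_i a_{2i+1} C_{k+1+i} = 0`, then `a_0 = 1` and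
`a_i = 0` for all `i ≥ 1`. -/
theorem catalan_moment_characterization (a : ℕ → ℝ)
    (hfin : (Function.support a).Finite)
    (heven : ∀ k : ℕ, ∑' i : ℕ, a (2 * i) * (catalan (k + i) : ℝ) = (catalan k : ℝ))
    (hodd : ∀ k : ℕ, ∑' i : ℕ, a (2 * i + 1) * (catalan (k + 1 + i) : ℝ) = 0) :
    a 0 = 1 ∧ ∀ i : ℕ, 1 ≤ i → a i = 0 := by
  obtain ⟨M, hM⟩ := hfin.bddAbove
  have ha : ∀ i, M < i → a i = 0 := fun i hi =>
    Function.notMem_support.1 fun h => (hM h).not_gt hi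
  have htsum (r N : ℕ) (hN : M < N) (g : ℕ → ℝ) :
      ∑' i, a (2 * i + r) * g i = ∑ i ∈ range N, a (2 * i + r) * g i :=
    tsum_eq_sum fun i hi => by rw [ha _ (by simp at hi; omega), zero_mul]
  have hodd0 (j : ℕ) : a (2 * j + 1) = 0 :=
    eq_zero_of_sum_range_mul_catalan_add (N := M + j + 1) (Set.infinite_of_forall_exists_gt
      fun n => ⟨n + 1, by rw [Set.mem_ofPred_eq, ← htsum _ _ (by omega), hodd], by omega⟩) j
      (by omega)
  have heven0 (j : ℕ) : a (2 * j) - (if j = 0 then 1 else 0) = 0 :=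
    eq_zero_of_sum_range_mul_catalan_add (d := fun i => a (2 * i) - if i = 0 then 1 else 0)
      (N := M + j + 1) (Set.infinite_of_forall_exists_gt fun n => ⟨n + 1, by
        simp only [Set.mem_ofPred_eq, sub_mul, sum_sub_distrib, ite_mul, one_mul, zero_mul,
          sum_ite_eq', mem_range, Nat.zero_lt_succ, if_true, add_zero, sub_eq_zero]
        rw [← heven]
        exact (htsum 0 _ (by omega) _).symm, by omega⟩) j (by omega)
  refine ⟨by simpa [sub_eq_zero] using heven0 0, fun i hi => ?_⟩
  obtain ⟨j, rfl | rfl⟩ := Nat.even_or_odd' i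
  · simpa [show j ≠ 0 by omega] using heven0 j
  · exact hodd0 j
end

section
/- Mixed moments against semicircle measure: for all natural numbers k and n, ∫_{-2}^2 x^k U_n(x/2) dμ_sc(x) = binom(k, (k-n)/2) - binom(k, (k-n)/2 - 1) when k - n is a nonnegative even number, and ∫_{-2}^2 x^k U_n(x/2) dμ_sc(x) = 0 otherwise. -/
open MeasureTheory Real Polynomial


noncomputable def scI (k : ℕ) (m : ℤ) : ℝ :=
  ∫ x in (-2 : ℝ)..2,
    x ^ k * (Polynomial.Chebyshev.U ℝ m).eval (x / 2) *
      ((1 / (2 * π)) * Real.sqrt (4 - x ^ 2))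

lemma scI_cont (k : ℕ) (m : ℤ) :
    Continuous fun x : ℝ => x ^ k * (Polynomial.Chebyshev.U ℝ m).eval (x / 2) *
      ((1 / (2 * π)) * Real.sqrt (4 - x ^ 2)) := by
  apply Continuous.mul
  · exact (continuous_pow k).mul
      ((Polynomial.Chebyshev.U ℝ m).continuous.comp (continuous_id.div_const 2))
  · exact continuous_const.mul (Real.continuous_sqrt.comp (by continuity))

lemma scI_intble (k : ℕ) (m : ℤ) :
    IntervalIntegrable (fun x : ℝ => x ^ k * (Polynomial.Chebyshev.U ℝ m).eval (x / 2) *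
      ((1 / (2 * π)) * Real.sqrt (4 - x ^ 2))) volume (-2) 2 :=
  (scI_cont k m).intervalIntegrable _ _

lemma scI_rec (k : ℕ) (m : ℤ) : scI (k + 1) m = scI k (m + 1) + scI k (m - 1) := by
  unfold scI
  rw [← intervalIntegral.integral_add (scI_intble k (m + 1)) (scI_intble k (m - 1))]
  apply intervalIntegral.integral_congr
  intro x _
  have h : (Polynomial.Chebyshev.U ℝ (m + 1)).eval (x / 2)
      = x * (Polynomial.Chebyshev.U ℝ m).eval (x / 2)
        - (Polynomial.Chebyshev.U ℝ (m - 1)).eval (x / 2) := by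
    rw [Polynomial.Chebyshev.U_add_one]
    simp only [eval_sub, eval_mul, eval_ofNat, eval_X]
    ring
  simp only [h]
  ring

lemma scI_neg_one (k : ℕ) : scI k (-1) = 0 := by
  unfold scI
  simp [Polynomial.Chebyshev.U_neg_one]

lemma cos_nat_integral (c : ℕ) :
    (∫ θ in (0:ℝ)..π, Real.cos (c * θ)) = if c = 0 then π else 0 := by
  rcases eq_or_ne c 0 with rfl | hc
  · simp
  · have hc' : (c : ℝ) ≠ 0 := Nat.cast_ne_zero.mpr hc
    rw [if_neg hc, intervalIntegral.integral_comp_mul_left (fun x => Real.cos x) hc']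
    simp [Real.sin_nat_mul_pi]

lemma scI_base (n : ℕ) :
    (∫ x in (-2 : ℝ)..2,
      (Polynomial.Chebyshev.U ℝ n).eval (x / 2) * ((1 / (2 * π)) * Real.sqrt (4 - x ^ 2)))
    = if n = 0 then 1 else 0 := by
  have hg : Continuous fun x : ℝ =>
      (Polynomial.Chebyshev.U ℝ n).eval (x / 2) * ((1 / (2 * π)) * Real.sqrt (4 - x ^ 2)) := by
    exact ((Polynomial.Chebyshev.U ℝ n).continuous.comp (continuous_id.div_const 2)).mul
      (continuous_const.mul (Real.continuous_sqrt.comp (by continuity)))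
  have hderiv : ∀ θ ∈ Set.uIcc (0:ℝ) π, HasDerivAt (fun θ : ℝ => 2 * Real.cos θ)
      ((fun θ : ℝ => -2 * Real.sin θ) θ) θ := by
    intro θ _
    simpa [mul_comm] using (Real.hasDerivAt_cos θ).const_mul 2
  have hcont : ContinuousOn (fun θ : ℝ => -2 * Real.sin θ) (Set.uIcc (0:ℝ) π) :=
    (continuous_const.mul Real.continuous_sin).continuousOn
  have hsub := intervalIntegral.integral_comp_mul_deriv hderiv hcont hg
  simp only [Real.cos_zero, mul_one, Real.cos_pi, mul_neg_one] at hsub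
  -- hsub : ∫ θ in 0..π, (g ∘ f) θ * f' θ = ∫ x in 2..-2, g x
  have h2 : (∫ x in (-2:ℝ)..2,
      (Polynomial.Chebyshev.U ℝ n).eval (x / 2) * ((1 / (2 * π)) * Real.sqrt (4 - x ^ 2)))
      = -∫ θ in (0:ℝ)..π, (fun θ => ((Polynomial.Chebyshev.U ℝ n).eval ((2 * Real.cos θ) / 2) *
          ((1 / (2 * π)) * Real.sqrt (4 - (2 * Real.cos θ) ^ 2))) * (-2 * Real.sin θ)) θ := by
    rw [show (∫ θ in (0:ℝ)..π, (fun θ => ((Polynomial.Chebyshev.U ℝ n).eval ((2 * Real.cos θ) / 2) *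
          ((1 / (2 * π)) * Real.sqrt (4 - (2 * Real.cos θ) ^ 2))) * (-2 * Real.sin θ)) θ)
        = ∫ x in (2:ℝ)..(-2), (Polynomial.Chebyshev.U ℝ n).eval (x / 2) *
          ((1 / (2 * π)) * Real.sqrt (4 - x ^ 2)) from hsub,
      intervalIntegral.integral_symm]
  rw [h2]
  have key : ∀ θ ∈ Set.uIcc (0:ℝ) π,
      (fun θ => ((Polynomial.Chebyshev.U ℝ n).eval ((2 * Real.cos θ) / 2) *
          ((1 / (2 * π)) * Real.sqrt (4 - (2 * Real.cos θ) ^ 2))) * (-2 * Real.sin θ)) θ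
      = -(1/π) * (Real.cos (n * θ) - Real.cos ((n + 2) * θ)) := by
    intro θ hθ
    rw [Set.uIcc_of_le Real.pi_pos.le] at hθ
    have hs : 0 ≤ Real.sin θ := Real.sin_nonneg_of_nonneg_of_le_pi hθ.1 hθ.2
    have hsq : Real.sqrt (4 - (2 * Real.cos θ) ^ 2) = 2 * Real.sin θ := by
      have : 4 - (2 * Real.cos θ) ^ 2 = (2 * Real.sin θ) ^ 2 := by
        have := Real.sin_sq_add_cos_sq θ; nlinarith
      rw [this, Real.sqrt_sq (by positivity)]
    have hU : (Polynomial.Chebyshev.U ℝ n).eval (Real.cos θ) * Real.sin θ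
        = Real.sin (((n : ℝ) + 1) * θ) := by
      exact_mod_cast Polynomial.Chebyshev.U_real_cos θ n
    have hcc : Real.cos ((n : ℝ) * θ) - Real.cos (((n : ℝ) + 2) * θ)
        = 2 * Real.sin (((n : ℝ) + 1) * θ) * Real.sin θ := by
      rw [Real.cos_sub_cos]
      ring_nf
      rw [Real.sin_neg]
      ring
    simp only []
    rw [mul_div_cancel_left₀ _ (two_ne_zero (α := ℝ)), hsq]
    have harr : (Polynomial.Chebyshev.U ℝ n).eval (Real.cos θ) * (1 / (2 * π) * (2 * Real.sin θ))
        * (-2 * Real.sin θ)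
        = -(1/π) * (2 * ((Polynomial.Chebyshev.U ℝ n).eval (Real.cos θ) * Real.sin θ) * Real.sin θ) := by
      ring
    rw [harr, hU, ← hcc]
  have h3 := intervalIntegral.integral_congr (μ := volume) key
  beta_reduce
  rw [h3]
  have hint1 : IntervalIntegrable (fun θ : ℝ => Real.cos ((n:ℝ) * θ)) volume 0 π :=
    (Real.continuous_cos.comp (continuous_const.mul continuous_id)).intervalIntegrable _ _
  have hint2 : IntervalIntegrable (fun θ : ℝ => Real.cos (((n:ℝ)+2) * θ)) volume 0 π :=
    (Real.continuous_cos.comp (continuous_const.mul continuous_id)).intervalIntegrable _ _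
  have hsplit : (∫ θ in (0:ℝ)..π, -(1/π) * (Real.cos ((n:ℝ) * θ) - Real.cos (((n:ℝ) + 2) * θ)))
      = -(1/π) * ((∫ θ in (0:ℝ)..π, Real.cos ((n:ℝ) * θ)) - ∫ θ in (0:ℝ)..π, Real.cos (((n:ℝ)+2) * θ)) := by
    rw [intervalIntegral.integral_const_mul]
    congr 1
    exact intervalIntegral.integral_sub hint1 hint2
  rw [hsplit, show ((n:ℝ)+2) = ((n+2:ℕ):ℝ) by push_cast; ring,
    cos_nat_integral n, cos_nat_integral (n+2)]
  rcases eq_or_ne n 0 with rfl | hn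
  · simp [Real.pi_ne_zero]
  · simp [hn]

noncomputable def bal : ℕ → ℕ → ℝ
  | 0, n => if n = 0 then 1 else 0
  | (k+1), 0 => bal k 1
  | (k+1), (n+1) => bal k (n+2) + bal k n

lemma bal_eq_zero : ∀ k n : ℕ, (∀ j, k ≠ n + 2 * j) → bal k n = 0 := by
  intro k
  induction k with
  | zero =>
    intro n h
    rcases n with _ | n
    · exact absurd rfl (h 0)
    · simp [bal]
  | succ k ih =>
    intro n h
    rcases n with _ | n
    · rw [show bal (k+1) 0 = bal k 1 from rfl]
      exact ih 1 (fun j hj => h (j+1) (by omega))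
    · rw [show bal (k+1) (n+1) = bal k (n+2) + bal k n from rfl,
        ih (n+2) (fun j hj => h (j+1) (by omega)), ih n (fun j hj => h j (by omega)), add_zero]

lemma bal_eq : ∀ k n j : ℕ, k = n + 2 * j →
    bal k n = (k.choose j : ℝ) - (if 1 ≤ j then (k.choose (j - 1) : ℝ) else 0) := by
  intro k
  induction k with
  | zero =>
    intro n j h
    have hn : n = 0 := by omega
    have hj : j = 0 := by omega
    subst hn; subst hj
    simp [bal]
  | succ k ih =>
    intro n j h
    rcases n with _ | m
    · -- n = 0, k + 1 = 2 j, so j = i + 1 and k = 1 + 2 i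
      obtain ⟨i, rfl⟩ : ∃ i, j = i + 1 := ⟨j - 1, by omega⟩
      have hk : k = 1 + 2 * i := by omega
      rw [show bal (k+1) 0 = bal k 1 from rfl, ih 1 i hk]
      rcases i with _ | i'
      · -- j = 1, k = 1
        have : k = 1 := by omega
        subst this
        norm_num [Nat.choose]
      · -- j = i' + 2, k = 2 i' + 3
        have hsymm : k.choose (i' + 2) = k.choose (i' + 1) := by
          have h1 : k - (i' + 2) = i' + 1 := by omega
          rw [← Nat.choose_symm (by omega : i' + 2 ≤ k), h1]
        have p1 : (k+1).choose (i' + 2) = k.choose (i' + 1) + k.choose (i' + 2) :=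
          Nat.choose_succ_succ k (i' + 1)
        have p2 : (k+1).choose (i' + 1) = k.choose i' + k.choose (i' + 1) :=
          Nat.choose_succ_succ k i'
        simp only [show i' + 1 + 1 = i' + 2 from rfl, p1, p2,
          Nat.add_sub_cancel, if_pos (by omega : 1 ≤ i' + 2), if_pos (by omega : 1 ≤ i' + 1)]
        rcases i' with _ | i''
        · have q2 : (((k+1).choose 1 : ℕ) : ℝ) = (k.choose 0 : ℝ) + (k.choose 1 : ℝ) := by
            exact_mod_cast p2
          push_cast [hsymm]
          linarith [q2]
        · simp only [show i''+1+1 = i''+2 from by omega] at p1 p2 ⊢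
          have q2 : (((k+1).choose (i''+2) : ℕ) : ℝ)
              = (k.choose (i''+1) : ℝ) + (k.choose (i''+2) : ℝ) := by exact_mod_cast p2
          push_cast [hsymm]
          linarith [q2]
    · -- n = m + 1
      rw [show bal (k+1) (m+1) = bal k (m+2) + bal k m from rfl]
      rcases j with _ | i
      · -- j = 0 : k = m
        have hk : k = m := by omega
        rw [bal_eq_zero k (m+2) (fun j' hj' => by omega), ih m 0 (by omega)]
        simp
      · -- j = i + 1 : k = m + 2 + 2 i = m + 2 (i+1)
        rw [ih (m+2) i (by omega), ih m (i+1) (by omega)]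
        have p1 : (k+1).choose (i + 1) = k.choose i + k.choose (i + 1) :=
          Nat.choose_succ_succ k i
        simp only [p1, Nat.add_sub_cancel, if_pos (by omega : 1 ≤ i + 1)]
        rcases i with _ | i'
        · simp only [if_neg (by omega : ¬ (1 ≤ 0))]
          norm_num
        · have p2 : (k+1).choose (i' + 1) = k.choose i' + k.choose (i' + 1) :=
            Nat.choose_succ_succ k i'
          simp only [if_pos (by omega : 1 ≤ i' + 1), Nat.add_sub_cancel, p2]
          push_cast
          ring

lemma scI_eq_bal : ∀ k n : ℕ, scI k n = bal k n := by
  intro k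
  induction k with
  | zero =>
    intro n
    have h : scI 0 n = ∫ x in (-2 : ℝ)..2,
        (Polynomial.Chebyshev.U ℝ n).eval (x / 2) * ((1 / (2 * π)) * Real.sqrt (4 - x ^ 2)) := by
      unfold scI
      simp only [pow_zero, one_mul]
    rw [h, scI_base n]
    rfl
  | succ k ih =>
    intro n
    rcases n with _ | m
    · rw [show ((0:ℕ):ℤ) = 0 from rfl, scI_rec k 0,
        show (0:ℤ) + 1 = ((1:ℕ):ℤ) from rfl, show (0:ℤ) - 1 = -1 by ring,
        scI_neg_one, ih 1, add_zero]
      rfl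
    · rw [scI_rec k ((m+1:ℕ):ℤ),
        show ((m+1:ℕ):ℤ) + 1 = ((m+2:ℕ):ℤ) by push_cast; ring,
        show ((m+1:ℕ):ℤ) - 1 = ((m:ℕ):ℤ) by push_cast; ring, ih (m+2), ih m]
      rfl

/-- Mixed moments of monomials against Chebyshev polynomials under the semicircle law:
`∫ x^k U_n(x/2) dμ_sc = binom(k, (k-n)/2) - binom(k, (k-n)/2 - 1)` when `k - n` is a
nonnegative even number (with `binom(k,-1) = 0`), and `0` otherwise. -/
theorem chebyshevU_semicircle_mixed_moments (k n : ℕ) :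
    (∀ j : ℕ, k = n + 2 * j →
      (∫ x in (-2 : ℝ)..2,
          x ^ k * (Polynomial.Chebyshev.U ℝ n).eval (x / 2) *
            ((1 / (2 * π)) * Real.sqrt (4 - x ^ 2))) =
        (k.choose j : ℝ) - (if 1 ≤ j then (k.choose (j - 1) : ℝ) else 0)) ∧
    ((∀ j : ℕ, k ≠ n + 2 * j) →
      (∫ x in (-2 : ℝ)..2,
          x ^ k * (Polynomial.Chebyshev.U ℝ n).eval (x / 2) *
            ((1 / (2 * π)) * Real.sqrt (4 - x ^ 2))) = 0) := by
  have h : (∫ x in (-2 : ℝ)..2,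
      x ^ k * (Polynomial.Chebyshev.U ℝ n).eval (x / 2) *
        ((1 / (2 * π)) * Real.sqrt (4 - x ^ 2))) = bal k n := scI_eq_bal k n
  constructor
  · intro j hj
    rw [h, bal_eq k n j hj]
  · intro hne
    rw [h, bal_eq_zero k n hne]
end
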